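/- Let G be a connected bipartite simple graph on n ≥ 3 vertices with maximum degree Δ ≤ n−2, and let S = Σ_{i=1}^n Tr_G(v_i). For every vertex v of G with deg(v) = Δ, putting D_v = Tr_G(v), a = (Δ+1)(S − 2D_v − 2 t_v Δ) + 2nΔ² and b = D_v² − 2SΔ² + 2 D_v t_v Δ + t_v² Δ², the least distance eigenvalue satisfies ρ^𝒟_min(G) ≤ (a + √(a² + 4b(1+Δ)(n−Δ−1))) / (2(1+Δ)(n−Δ−1)). -/

import Mathlib

open Finset Matrix

noncomputable def distMatrix {V : Type*} [Fintype V] (G : SimpleGraph V) : Matrix V V ℝ :=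
  Matrix.of fun u v => (G.dist u v : ℝ)

theorem distMatrix_isHermitian {V : Type*} [Fintype V] (G : SimpleGraph V) :
    (distMatrix G).IsHermitian := by
  show (distMatrix G)ᴴ = distMatrix G
  ext i j
  simp [distMatrix, Matrix.conjTranspose_apply, SimpleGraph.dist_comm]

noncomputable def transmission {V : Type*} [Fintype V] (G : SimpleGraph V) (v : V) : ℝ :=
  ∑ u, (G.dist v u : ℝ)

noncomputable def distSLMatrix {V : Type*} [Fintype V] [DecidableEq V] (G : SimpleGraph V) :
    Matrix V V ℝ :=
  Matrix.diagonal (transmission G) + distMatrix G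

theorem distSLMatrix_isHermitian {V : Type*} [Fintype V] [DecidableEq V] (G : SimpleGraph V) :
    (distSLMatrix G).IsHermitian :=
  (Matrix.isHermitian_diagonal _).add (distMatrix_isHermitian G)

noncomputable def maxEig {V : Type*} [Fintype V] [DecidableEq V] {A : Matrix V V ℝ}
    (hA : A.IsHermitian) : ℝ :=
  ⨆ i, hA.eigenvalues i

noncomputable def minEig {V : Type*} [Fintype V] [DecidableEq V] {A : Matrix V V ℝ}
    (hA : A.IsHermitian) : ℝ :=
  ⨅ i, hA.eigenvalues i

noncomputable def distSpread {V : Type*} [Fintype V] [DecidableEq V] (G : SimpleGraph V) : ℝ :=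
  maxEig (distMatrix_isHermitian G) - minEig (distMatrix_isHermitian G)

noncomputable def distSLSpread {V : Type*} [Fintype V] [DecidableEq V] (G : SimpleGraph V) : ℝ :=
  maxEig (distSLMatrix_isHermitian G) - minEig (distSLMatrix_isHermitian G)

/-!
Let `C` be the closed neighbourhood of `v` and `B` the quotient matrix of `𝒟(G)` for the
partition `{C, Cᶜ}`. For every eigenvalue `r` of `B` some vector constant on `C` and on `Cᶜ` has
Rayleigh quotient `r`, so `ρ_min ≤ r`. A bipartite graph has no triangles, so distinct neighbours
of `v` are at distance `2` and the block of `𝒟(G)` on `C × C` sums to `2Δ²`; expressing `S` and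
`D_v + Δ t_v` through the block sums identifies `(1+Δ)(n-Δ-1) r² - a r - b` with
`(1+Δ)(n-Δ-1) det (B - r I)`, and the bound is its larger root.
-/

theorem exists_quadForm_eq_of_mul_sub_mul_sub_eq_sq {p q x y z r : ℝ}
    (h : (x - r * p) * (z - r * q) = y ^ 2) :
    ∃ α β : ℝ, (α ≠ 0 ∨ β ≠ 0) ∧
      α ^ 2 * x + 2 * α * β * y + β ^ 2 * z = r * (p * α ^ 2 + q * β ^ 2) := by
  by_cases hxy : x - r * p = 0 ∧ y = 0
  · exact ⟨1, 0, by simp, by linear_combination hxy.1⟩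
  · refine ⟨y, -(x - r * p), ?_, by linear_combination (x - r * p) * h⟩
    simpa only [not_and_or, ne_eq, neg_eq_zero, or_comm] using hxy

theorem mul_sub_mul_sub_eq_sq_of_eq_largerRoot {P Q x y z a b r : ℝ} (hP : 0 < P) (hQ : 0 < Q)
    (ha : a = Q * x + P * z) (hb : b = y ^ 2 - x * z)
    (hr : r = (a + √(a ^ 2 + 4 * b * P * Q)) / (2 * P * Q)) :
    (x - r * P) * (z - r * Q) = y ^ 2 := by
  have hdisc : 0 ≤ a ^ 2 + 4 * b * P * Q := by
    have := mul_pos hP hQ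
    rw [ha, hb]
    nlinarith [sq_nonneg (Q * x - P * z), sq_nonneg y]
  have hroot : P * Q * (r * r) + -a * r + -b = 0 := by
    rw [quadratic_eq_zero_iff (by positivity) (s := √(a ^ 2 + 4 * b * P * Q))]
    · left
      rw [hr, neg_neg]
      ring
    · rw [discrim, Real.mul_self_sqrt hdisc]
      ring
  linear_combination hroot + r * ha + hb

namespace Matrix

variable {V : Type*}

def blockSum (M : Matrix V V ℝ) (s t : Finset V) : ℝ :=
  ∑ u ∈ s, ∑ w ∈ t, M u w

theorem IsHermitian.blockSum_comm {M : Matrix V V ℝ} (hM : M.IsHermitian) (s t : Finset V) :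
    blockSum M t s = blockSum M s t := by
  unfold blockSum
  exact sum_comm.trans <| sum_congr rfl fun u _ => sum_congr rfl fun w _ => by
    simpa using hM.apply u w

variable [DecidableEq V]

def blockVec (s : Finset V) (α β : ℝ) : V → ℝ :=
  fun u => if u ∈ s then α else β

@[simp]
theorem blockVec_of_mem {s : Finset V} {u : V} (hu : u ∈ s) (α β : ℝ) : blockVec s α β u = α :=
  if_pos hu

@[simp]
theorem blockVec_of_notMem {s : Finset V} {u : V} (hu : u ∉ s) (α β : ℝ) :
    blockVec s α β u = β :=
  if_neg hu

variable [Fintype V]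

theorem sum_sum_univ_eq_blockSum_add (M : Matrix V V ℝ) (s : Finset V) :
    ∑ u ∈ s, ∑ w, M u w = blockSum M s s + blockSum M s sᶜ := by
  rw [blockSum, blockSum, ← sum_add_distrib]
  exact sum_congr rfl fun u _ => (sum_add_sum_compl s _).symm

theorem IsHermitian.sum_sum_eq_blockSum_add {M : Matrix V V ℝ} (hM : M.IsHermitian)
    (s : Finset V) :
    ∑ u, ∑ w, M u w = blockSum M s s + 2 * blockSum M s sᶜ + blockSum M sᶜ sᶜ := by
  rw [← sum_add_sum_compl s, sum_sum_univ_eq_blockSum_add M s, sum_sum_univ_eq_blockSum_add M sᶜ,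
    compl_compl, hM.blockSum_comm s sᶜ]
  ring

theorem blockVec_dotProduct (s : Finset V) (α β : ℝ) (x : V → ℝ) :
    blockVec s α β ⬝ᵥ x = α * ∑ u ∈ s, x u + β * ∑ u ∈ sᶜ, x u := by
  rw [dotProduct, ← sum_add_sum_compl s, mul_sum, mul_sum]
  congr 1 <;> refine sum_congr rfl fun u hu => ?_ <;> simp_all

theorem blockVec_dotProduct_self (s : Finset V) (α β : ℝ) :
    blockVec s α β ⬝ᵥ blockVec s α β = #s * α ^ 2 + #sᶜ * β ^ 2 := by
  rw [blockVec_dotProduct, sum_congr rfl fun u hu => blockVec_of_mem hu α β,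
    sum_congr rfl fun u hu => blockVec_of_notMem (mem_compl.1 hu) α β]
  simp only [sum_const, nsmul_eq_mul]
  ring

theorem mulVec_blockVec (M : Matrix V V ℝ) (s : Finset V) (α β : ℝ) (u : V) :
    (M *ᵥ blockVec s α β) u = α * ∑ w ∈ s, M u w + β * ∑ w ∈ sᶜ, M u w := by
  rw [mulVec, dotProduct_comm, blockVec_dotProduct]

theorem IsHermitian.blockVec_dotProduct_mulVec {M : Matrix V V ℝ} (hM : M.IsHermitian)
    (s : Finset V) (α β : ℝ) :
    blockVec s α β ⬝ᵥ M *ᵥ blockVec s α β =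
      α ^ 2 * blockSum M s s + 2 * α * β * blockSum M s sᶜ + β ^ 2 * blockSum M sᶜ sᶜ := by
  have hcomm := hM.blockSum_comm s sᶜ
  simp only [blockVec_dotProduct, mulVec_blockVec, sum_add_distrib, ← mul_sum] at hcomm ⊢
  simp only [blockSum] at hcomm ⊢
  rw [hcomm]
  ring

theorem IsHermitian.minEig_mul_dotProduct_self_le {A : Matrix V V ℝ} (hA : A.IsHermitian)
    (x : V → ℝ) : minEig hA * (x ⬝ᵥ x) ≤ x ⬝ᵥ A *ᵥ x := by
  cases isEmpty_or_nonempty V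
  · simp [dotProduct]
  set U : Matrix V V ℝ := (hA.eigenvectorUnitary : Matrix V V ℝ) with hU
  set c : V → ℝ := Uᵀ *ᵥ x
  have hstar : star U = Uᵀ := by
    ext i j
    simp [star_apply]
  have hquad : x ⬝ᵥ A *ᵥ x = ∑ i, hA.eigenvalues i * c i ^ 2 := by
    conv_lhs => rw [hA.spectral_theorem, Unitary.conjStarAlgAut_apply]
    rw [← hU, hstar, ← mulVec_mulVec, ← mulVec_mulVec, dotProduct_mulVec,
      ← mulVec_transpose]
    simp [mulVec, dotProduct, diagonal, sq, c, mul_comm, mul_left_comm]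
  have hnorm : x ⬝ᵥ x = ∑ i, c i ^ 2 := by
    have hUU : U * Uᵀ = 1 := hstar ▸ mem_unitaryGroup_iff.mp hA.eigenvectorUnitary.2
    have : c ⬝ᵥ c = x ⬝ᵥ x := by
      rw [dotProduct_mulVec, ← mulVec_transpose, transpose_transpose, mulVec_mulVec, hUU,
        one_mulVec]
    rw [← this]
    simp [dotProduct, sq]
  rw [hquad, hnorm, mul_sum]
  gcongr with i
  exact ciInf_le (Finite.bddBelow_range _) i

/-- `r` is an eigenvalue of the quotient matrix of `M` for the partition `{s, sᶜ}`. -/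
theorem IsHermitian.minEig_le_of_mul_sub_mul_sub_eq_sq {M : Matrix V V ℝ} (hM : M.IsHermitian)
    {s : Finset V} (hs : s.Nonempty) (hsc : sᶜ.Nonempty) {r : ℝ}
    (hr : (blockSum M s s - r * #s) * (blockSum M sᶜ sᶜ - r * #sᶜ) = blockSum M s sᶜ ^ 2) :
    minEig hM ≤ r := by
  obtain ⟨α, β, hαβ, hquad⟩ := exists_quadForm_eq_of_mul_sub_mul_sub_eq_sq hr
  have hpos : 0 < blockVec s α β ⬝ᵥ blockVec s α β := by
    have hs' : (0 : ℝ) < #s := by exact_mod_cast hs.card_pos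
    have hsc' : (0 : ℝ) < #sᶜ := by exact_mod_cast hsc.card_pos
    rw [blockVec_dotProduct_self]
    rcases hαβ with h | h <;> positivity
  refine le_of_mul_le_mul_right ?_ hpos
  calc minEig hM * (blockVec s α β ⬝ᵥ blockVec s α β)
      ≤ blockVec s α β ⬝ᵥ M *ᵥ blockVec s α β := hM.minEig_mul_dotProduct_self_le _
    _ = r * (blockVec s α β ⬝ᵥ blockVec s α β) := by
      rw [hM.blockVec_dotProduct_mulVec, hquad, blockVec_dotProduct_self]

end Matrix

namespace SimpleGraph

variable {V : Type*} {G : SimpleGraph V}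

theorem Colorable.dist_eq_two_of_adj_of_adj (hG : G.Colorable 2) {v u w : V} (hu : G.Adj v u)
    (hw : G.Adj v w) (huw : u ≠ w) : G.dist u w = 2 := by
  classical
  have hnadj : ¬ G.Adj u w := fun h =>
    hG.cliqueFree (by norm_num : 2 < 3) {v, u, w} (is3Clique_triple_iff.2 ⟨hu, hw, h⟩)
  have : G.edist u w = 2 :=
    edist_eq_two_iff.2 ⟨huw, hnadj, v, G.mem_commonNeighbors.2 ⟨hu.symm, hw.symm⟩⟩
  simp [dist, this]

theorem Colorable.blockSum_distMatrix_closedNbhd [Fintype V] [DecidableEq V] [DecidableRel G.Adj]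
    (hG : G.Colorable 2) (v : V) :
    Matrix.blockSum (distMatrix G) (insert v (G.neighborFinset v)) (insert v (G.neighborFinset v))
      = 2 * G.degree v ^ 2 := by
  set N := G.neighborFinset v
  have hvN : v ∉ N := by simp [N]
  have hN : (#N : ℝ) = G.degree v := by rw [card_neighborFinset_eq_degree]
  have hrow_self : ∑ w ∈ insert v N, (G.dist v w : ℝ) = G.degree v := by
    rw [sum_insert hvN, sum_congr rfl fun w hw => by
      rw [dist_eq_one_iff_adj.2 ((mem_neighborFinset G v w).1 hw)]]
    simp [hN]
  have hrow_nbr : ∀ u ∈ N, ∑ w ∈ insert v N, (G.dist u w : ℝ) = 2 * G.degree v - 1 := by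
    intro u hu
    have hdist : ∀ w ∈ N, (G.dist u w : ℝ) = 2 - if u = w then 2 else 0 := by
      intro w hw
      by_cases huw : u = w
      · simp [huw]
      · simp [hG.dist_eq_two_of_adj_of_adj ((mem_neighborFinset G v u).1 hu)
          ((mem_neighborFinset G v w).1 hw) huw, huw]
    rw [sum_insert hvN, sum_congr rfl hdist, sum_sub_distrib, sum_ite_eq, if_pos hu, sum_const,
      dist_comm, dist_eq_one_iff_adj.2 ((mem_neighborFinset G v u).1 hu), nsmul_eq_mul, hN]
    push_cast
    ring
  simp only [Matrix.blockSum, distMatrix, Matrix.of_apply]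
  rw [sum_insert hvN, hrow_self, sum_congr rfl hrow_nbr, sum_const, nsmul_eq_mul, hN]
  ring

theorem sum_transmission_eq_blockSum_add [Fintype V] [DecidableEq V] (s : Finset V) :
    ∑ u ∈ s, transmission G u =
      Matrix.blockSum (distMatrix G) s s + Matrix.blockSum (distMatrix G) s sᶜ :=
  Matrix.sum_sum_univ_eq_blockSum_add (distMatrix G) s

theorem sum_neighborFinset_div_degree_mul_degree [Fintype V] [DecidableRel G.Adj] (v : V)
    (f : V → ℝ) :
    (∑ u ∈ G.neighborFinset v, f u) / G.degree v * G.degree v = ∑ u ∈ G.neighborFinset v, f u :=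
  div_mul_cancel_of_imp fun h => by
    have : #(G.neighborFinset v) = 0 := by rw [card_neighborFinset_eq_degree]; exact_mod_cast h
    rw [card_eq_zero.1 this, sum_empty]

end SimpleGraph

theorem stmt3_general {V : Type*} [Fintype V] [DecidableEq V] (G : SimpleGraph V) [DecidableRel G.Adj]
    (hbip : G.Colorable 2)
    (n : ℕ) (hn : n = Fintype.card V)
    (Δ : ℕ) (hΔn : Δ + 2 ≤ n)
    (S : ℝ) (hS : S = ∑ u, transmission G u)
    (v : V) (hv : G.degree v = Δ)
    (Dv tv a b : ℝ)
    (hDv : Dv = transmission G v)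
    (htv : tv = (∑ u ∈ G.neighborFinset v, transmission G u) / Δ)
    (ha : a = (Δ + 1) * (S - 2*Dv - 2*tv*Δ) + 2*n*Δ^2)
    (hb : b = Dv^2 - 2*S*Δ^2 + 2*Dv*tv*Δ + tv^2*Δ^2) :
    minEig (distMatrix_isHermitian G) ≤
      (a + Real.sqrt (a^2 + 4*b*(1 + Δ)*(n - Δ - 1))) / (2*(1 + Δ)*((n : ℝ) - Δ - 1)) := by
  set D := distMatrix G
  set C := insert v (G.neighborFinset v)
  have hvN : v ∉ G.neighborFinset v := G.notMem_neighborFinset_self v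
  have hC : (#C : ℝ) = 1 + Δ := by
    rw [card_insert_of_notMem hvN, G.card_neighborFinset_eq_degree, hv]
    push_cast
    ring
  have hCc : (#Cᶜ : ℝ) = n - Δ - 1 := by
    rw [card_compl, Nat.cast_sub (card_le_univ C), hC, ← hn]
    ring
  have hCc_pos : (0 : ℝ) < n - Δ - 1 := by
    have : (Δ : ℝ) + 2 ≤ n := by exact_mod_cast hΔn
    linarith
  have hCC : blockSum D C C = 2 * Δ ^ 2 := by rw [hbip.blockSum_distMatrix_closedNbhd, hv]
  have hrows : Dv + tv * Δ = blockSum D C C + blockSum D C Cᶜ := by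
    rw [hDv, htv, ← hv, G.sum_neighborFinset_div_degree_mul_degree, ← sum_insert hvN,
      G.sum_transmission_eq_blockSum_add]
  have hsum : S = blockSum D C C + 2 * blockSum D C Cᶜ + blockSum D Cᶜ Cᶜ :=
    hS.trans ((distMatrix_isHermitian G).sum_sum_eq_blockSum_add C)
  refine (distMatrix_isHermitian G).minEig_le_of_mul_sub_mul_sub_eq_sq (insert_nonempty v _)
    (card_pos.1 (by exact_mod_cast hCc ▸ hCc_pos)) ?_
  rw [hC, hCc]
  refine mul_sub_mul_sub_eq_sq_of_eq_largerRoot (by positivity) hCc_pos ?_ ?_ rfl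
  · linear_combination ha + (1 + Δ) * hsum - 2 * (1 + Δ) * hrows - n * hCC
  · linear_combination hb + (Dv + tv * Δ + blockSum D C C + blockSum D C Cᶜ) * hrows
      - blockSum D C C * hsum + S * hCC

theorem stmt3 {V : Type*} [Fintype V] [DecidableEq V] (G : SimpleGraph V) [DecidableRel G.Adj]
    (hconn : G.Connected) (hbip : G.Colorable 2)
    (n : ℕ) (hn : n = Fintype.card V) (hn3 : 3 ≤ n)
    (Δ : ℕ) (hΔ : G.maxDegree = Δ) (hΔn : Δ + 2 ≤ n)
    (S : ℝ) (hS : S = ∑ u, transmission G u)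
    (v : V) (hv : G.degree v = Δ)
    (Dv tv a b : ℝ)
    (hDv : Dv = transmission G v)
    (htv : tv = (∑ u ∈ G.neighborFinset v, transmission G u) / Δ)
    (ha : a = (Δ + 1) * (S - 2*Dv - 2*tv*Δ) + 2*n*Δ^2)
    (hb : b = Dv^2 - 2*S*Δ^2 + 2*Dv*tv*Δ + tv^2*Δ^2) :
    minEig (distMatrix_isHermitian G) ≤
      (a + Real.sqrt (a^2 + 4*b*(1 + Δ)*(n - Δ - 1))) / (2*(1 + Δ)*((n : ℝ) - Δ - 1)) :=
  stmt3_general G hbip n hn Δ hΔn S hS v hv Dv tv a b hDv htv ha hb
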